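/- For any n ≥ 3 and side lengths a₁, …, aₙ > 0 with each aᵢ less than the sum of the others, there exists at most one (up to orientation-preserving isometry) convex polygon inscribed in a circle with consecutive side lengths a₁, …, aₙ; equivalently, the circumradius R of such a cyclic polygon is uniquely determined by a₁, …, aₙ. -/

import Mathlib

/-!
Put the centre of the circle at the origin of `ℂ`. Consecutive vertices of a convex inscribed
polygon differ by rotations through central angles `2 xᵢ` with `xᵢ ∈ (0, π)`; convexity forces
the winding number to be one, so `∑ xᵢ = π`, and `aᵢ = 2 R sin xᵢ`.

For a second polygon with radius `R' ≥ R` and half-angles `yᵢ` we get `sin xᵢ = l sin yᵢ` with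
`l = R' / R ≥ 1`. If `x ≠ y`, some `xⱼ < yⱼ`; this forces `yⱼ > π / 2` and every other angle of
both polygons to be at most `π / 2`, so `xᵢ = arcsin (l sin yᵢ)` for `i ≠ j`. For `l = 1` this
already gives `x = y`. For `l > 1`, strict superadditivity of `u ↦ arcsin (l sin u)` on
`[0, π / 2]` gives `π - xⱼ = ∑_{i ≠ j} arcsin (l sin yᵢ) < arcsin (l sin (π - yⱼ)) =
arcsin (sin xⱼ) ≤ π - xⱼ`. Hence `R = R'`, `x = y`, and the rotation about the centres taking
`A₀` to `B₀` carries one polygon onto the other.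
-/

/-- The cross product (signed area ×2) of the triangle `P Q R` in the plane. -/
def cross2 (P Q R : EuclideanSpace ℝ (Fin 2)) : ℝ :=
  (Q 0 - P 0) * (R 1 - P 1) - (Q 1 - P 1) * (R 0 - P 0)

open Real Set Finset

theorem sin_sq_add_sin_sq_le_sin_add_sq {u v : ℝ} (hu : 0 ≤ u) (hv : 0 ≤ v) (huv : u + v ≤ π / 2) :
    sin u ^ 2 + sin v ^ 2 ≤ sin (u + v) ^ 2 := by
  have key : sin (u + v) ^ 2 - sin u ^ 2 - sin v ^ 2 = 2 * sin u * sin v * cos (u + v) := by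
    rw [sin_add, cos_add]
    linear_combination sin u ^ 2 * sin_sq_add_cos_sq v + sin v ^ 2 * sin_sq_add_cos_sq u
  have := mul_nonneg (mul_nonneg (sin_nonneg_of_nonneg_of_le_pi hu (by linarith [pi_pos]))
    (sin_nonneg_of_nonneg_of_le_pi hv (by linarith [pi_pos])))
    (cos_nonneg_of_mem_Icc ⟨by linarith [pi_pos], huv⟩)
  nlinarith

theorem lt_arcsin_mul_sin {l u : ℝ} (hl : 1 < l) (hu : 0 < u) (hu' : u ≤ π / 2)
    (h1 : l * sin u ≤ 1) : u < arcsin (l * sin u) := by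
  have hsin : 0 < sin u := sin_pos_of_pos_of_lt_pi hu (by linarith [pi_pos])
  rw [lt_arcsin_iff_sin_lt ⟨by linarith [pi_pos], hu'⟩ ⟨by nlinarith, h1⟩]
  nlinarith

theorem arcsin_mul_sin_add_le_pi_div_two {l u v : ℝ} (hl : 0 ≤ l) (hu : 0 ≤ u) (hv : 0 ≤ v)
    (huv : u + v ≤ π / 2) (h1 : l * sin (u + v) ≤ 1) :
    arcsin (l * sin u) + arcsin (l * sin v) ≤ π / 2 := by
  have hsu := sin_nonneg_of_nonneg_of_le_pi hu (by linarith [pi_pos])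
  have hsv := sin_nonneg_of_nonneg_of_le_pi hv (by linarith [pi_pos])
  have hsq : (l * sin u) ^ 2 + (l * sin v) ^ 2 ≤ 1 := by
    have h2 : (l * sin (u + v)) ^ 2 ≤ 1 := by
      have := mul_nonneg hl
        (sin_nonneg_of_nonneg_of_le_pi (add_nonneg hu hv) (by linarith [pi_pos]))
      nlinarith
    nlinarith [sin_sq_add_sin_sq_le_sin_add_sq hu hv huv, sq_nonneg l]
  have hle : arcsin (l * sin v) ≤ π / 2 - arcsin (l * sin u) := by
    rw [arcsin_le_iff_le_sin ⟨by nlinarith, by nlinarith⟩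
      ⟨by linarith [arcsin_le_pi_div_two (l * sin u)],
        by linarith [arcsin_nonneg.2 (mul_nonneg hl hsu)]⟩,
      sin_pi_div_two_sub, cos_arcsin]
    exact le_sqrt_of_sq_le (by linarith)
  linarith

theorem arcsin_mul_sin_add_arcsin_mul_sin_lt {l u v : ℝ} (hl : 1 < l) (hu : 0 < u) (hv : 0 < v)
    (huv : u + v ≤ π / 2) (h1 : l * sin (u + v) ≤ 1) :
    arcsin (l * sin u) + arcsin (l * sin v) < arcsin (l * sin (u + v)) := by
  have hsu : 0 < sin u := sin_pos_of_pos_of_lt_pi hu (by linarith [pi_pos])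
  have hsv : 0 < sin v := sin_pos_of_pos_of_lt_pi hv (by linarith [pi_pos])
  have hu1 : l * sin u ≤ 1 := le_trans (mul_le_mul_of_nonneg_left
    (sin_le_sin_of_le_of_le_pi_div_two (by linarith [pi_pos]) huv (by linarith)) (by linarith)) h1
  have hv1 : l * sin v ≤ 1 := le_trans (mul_le_mul_of_nonneg_left
    (sin_le_sin_of_le_of_le_pi_div_two (by linarith [pi_pos]) huv (by linarith)) (by linarith)) h1
  have hUV := arcsin_mul_sin_add_le_pi_div_two (by linarith) hu.le hv.le huv h1
  have hcosU : cos (arcsin (l * sin u)) < cos u := cos_lt_cos_of_nonneg_of_le_pi hu.le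
    (by linarith [arcsin_le_pi_div_two (l * sin u), pi_pos])
    (lt_arcsin_mul_sin hl hu (by linarith) hu1)
  have hcosV : cos (arcsin (l * sin v)) < cos v := cos_lt_cos_of_nonneg_of_le_pi hv.le
    (by linarith [arcsin_le_pi_div_two (l * sin v), pi_pos])
    (lt_arcsin_mul_sin hl hv (by linarith) hv1)
  have hU0 := arcsin_nonneg.2 (by positivity : 0 ≤ l * sin u)
  have hV0 := arcsin_nonneg.2 (by positivity : 0 ≤ l * sin v)
  rw [lt_arcsin_iff_sin_lt ⟨by linarith [pi_pos], hUV⟩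
      ⟨by nlinarith [sin_pos_of_pos_of_lt_pi (add_pos hu hv) (by linarith [pi_pos])], h1⟩,
    sin_add, sin_arcsin (by nlinarith) hu1, sin_arcsin (by nlinarith) hv1, sin_add]
  nlinarith [mul_lt_mul_of_pos_left hcosV (by positivity : 0 < l * sin u),
    mul_lt_mul_of_pos_left hcosU (by positivity : 0 < l * sin v)]

theorem sum_arcsin_mul_sin_lt {ι : Type*} {l : ℝ} (hl : 1 < l) {y : ι → ℝ} {s : Finset ι}
    (hs : 2 ≤ #s) (hpos : ∀ i ∈ s, 0 < y i) (hsum : ∑ i ∈ s, y i ≤ π / 2)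
    (h1 : l * sin (∑ i ∈ s, y i) ≤ 1) :
    ∑ i ∈ s, arcsin (l * sin (y i)) < arcsin (l * sin (∑ i ∈ s, y i)) := by
  induction s using Finset.cons_induction with
  | empty => simp at hs
  | cons i s hi ih =>
    rw [sum_cons] at hsum h1 ⊢
    rw [sum_cons]
    have hyi := hpos i (mem_cons_self i s)
    have hs0 : s.Nonempty := card_pos.1 (by rw [card_cons] at hs; omega)
    have hspos : 0 < ∑ j ∈ s, y j := sum_pos (fun j hj => hpos j (mem_cons_of_mem hj)) hs0
    have hstep := arcsin_mul_sin_add_arcsin_mul_sin_lt hl hyi hspos hsum h1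
    obtain hs1 | hs2 := (Nat.one_le_iff_ne_zero.2 (card_pos.2 hs0).ne').eq_or_lt
    · obtain ⟨j, rfl⟩ := card_eq_one.1 hs1.symm
      simpa using hstep
    · have hmono : sin (∑ j ∈ s, y j) ≤ sin (y i + ∑ j ∈ s, y j) :=
        sin_le_sin_of_le_of_le_pi_div_two (by linarith [pi_pos]) hsum (by linarith)
      have := ih hs2 (fun j hj => hpos j (mem_cons_of_mem hj)) (by linarith)
        (le_trans (mul_le_mul_of_nonneg_left hmono (by linarith)) h1)
      linarith

theorem arcsin_sin_le {t : ℝ} (ht : -(π / 2) ≤ t) : arcsin (sin t) ≤ t := by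
  rcases le_or_gt t (π / 2) with h | h
  · rw [arcsin_sin ht h]
  · exact (arcsin_le_pi_div_two _).trans h.le

theorem add_lt_sum_of_three_le_card {ι : Type*} [Fintype ι] (hcard : 3 ≤ Fintype.card ι)
    {z : ι → ℝ} (hz : ∀ i, 0 < z i) {i j : ι} (hij : i ≠ j) : z i + z j < ∑ k, z k := by
  classical
  obtain ⟨k, -, hk⟩ := exists_mem_notMem_of_card_lt_card (s := {i, j}) (t := univ)
    (by rw [card_pair hij, card_univ]; omega)
  rw [← sum_pair hij]
  exact sum_lt_sum_of_subset (subset_univ _) (mem_univ k) hk (hz k) fun k _ _ => (hz k).le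

theorem le_pi_div_two_of_sin_eq_mul_sin_of_lt {ι : Type*} [Fintype ι]
    (hcard : 3 ≤ Fintype.card ι) {x y : ι → ℝ} {l : ℝ} (hl : 1 ≤ l) (hx : ∀ i, x i ∈ Ioo 0 π)
    (hy : ∀ i, y i ∈ Ioo 0 π) (hsx : ∑ i, x i = π) (hsy : ∑ i, y i = π)
    (hxy : ∀ i, sin (x i) = l * sin (y i)) {j : ι} (hj : x j < y j) :
    π / 2 < y j ∧ ∀ i ≠ j, x i ≤ π / 2 ∧ y i ≤ π / 2 := by
  have hyj : π / 2 < y j := by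
    by_contra! h
    have := sin_lt_sin_of_lt_of_le_pi_div_two (by linarith [(hx j).1, pi_pos]) h hj
    nlinarith [hxy j, sin_pos_of_mem_Ioo (hy j)]
  refine ⟨hyj, fun i hij => ?_⟩
  have hx' := hsx ▸ add_lt_sum_of_three_le_card hcard (fun k => (hx k).1) hij
  have hy' := hsy ▸ add_lt_sum_of_three_le_card hcard (fun k => (hy k).1) hij
  refine ⟨?_, by linarith⟩
  by_contra! h
  have h1 : sin (x j) < sin (x i) := by
    rw [← sin_pi_sub (x i)]
    exact sin_lt_sin_of_lt_of_le_pi_div_two (by linarith [(hx j).1, pi_pos]) (by linarith)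
      (by linarith)
  have h2 : sin (y i) ≤ sin (y j) := by
    rw [← sin_pi_sub (y j)]
    exact sin_le_sin_of_le_of_le_pi_div_two (by linarith [(hy i).1, pi_pos]) (by linarith)
      (by linarith)
  rw [hxy, hxy] at h1
  nlinarith

theorem eq_of_sin_eq_mul_sin {ι : Type*} [Fintype ι] (hcard : 3 ≤ Fintype.card ι)
    {x y : ι → ℝ} {l : ℝ} (hl : 1 ≤ l) (hx : ∀ i, x i ∈ Ioo 0 π) (hy : ∀ i, y i ∈ Ioo 0 π)
    (hsx : ∑ i, x i = π) (hsy : ∑ i, y i = π) (hxy : ∀ i, sin (x i) = l * sin (y i)) :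
    x = y := by
  classical
  by_contra hne
  obtain ⟨j, hj⟩ : ∃ j, x j < y j := by
    by_contra! h
    exact hne (funext fun i => ((sum_eq_sum_iff_of_le fun i _ => h i).1 (hsy.trans hsx.symm)
      i (mem_univ i)).symm)
  obtain ⟨hyj, hle⟩ := le_pi_div_two_of_sin_eq_mul_sin_of_lt hcard hl hx hy hsx hsy hxy hj
  have harc : ∀ i ∈ univ.erase j, arcsin (l * sin (y i)) = x i := fun i hi => by
    rw [← hxy, arcsin_sin (by linarith [(hx i).1, pi_pos]) (hle i (ne_of_mem_erase hi)).1]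
  have hsx' : ∑ i ∈ univ.erase j, x i = π - x j := by
    rw [← hsx, ← sum_erase_add _ _ (mem_univ j), add_sub_cancel_right]
  have hsy' : ∑ i ∈ univ.erase j, y i = π - y j := by
    rw [← hsy, ← sum_erase_add _ _ (mem_univ j), add_sub_cancel_right]
  obtain rfl | hl := hl.eq_or_lt
  · have : ∑ i ∈ univ.erase j, x i = ∑ i ∈ univ.erase j, y i := by
      refine sum_congr rfl fun i hi => ?_
      rw [← harc i hi, one_mul,
        arcsin_sin (by linarith [(hy i).1, pi_pos]) (hle i (ne_of_mem_erase hi)).2]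
    linarith
  · have hcard' : 2 ≤ #(univ.erase j) := by
      rw [card_erase_of_mem (mem_univ j), card_univ]
      omega
    have hlt := sum_arcsin_mul_sin_lt hl hcard' (fun i _ => (hy i).1) (by linarith)
      (by rw [hsy', sin_pi_sub, ← hxy]; exact sin_le_one _)
    rw [sum_congr rfl harc, hsx', hsy', sin_pi_sub, ← hxy, ← sin_pi_sub] at hlt
    linarith [arcsin_sin_le (t := π - x j) (by linarith [(hx j).2, pi_pos])]

theorem eq_and_eq_of_mul_sin_eq {ι : Type*} [Fintype ι] (hcard : 3 ≤ Fintype.card ι)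
    {x y : ι → ℝ} {R₁ R₂ : ℝ} (hx : ∀ i, x i ∈ Ioo 0 π) (hy : ∀ i, y i ∈ Ioo 0 π)
    (hsx : ∑ i, x i = π) (hsy : ∑ i, y i = π) (hR₁ : 0 < R₁) (hR₂ : 0 < R₂)
    (h : ∀ i, R₁ * sin (x i) = R₂ * sin (y i)) : R₁ = R₂ ∧ x = y := by
  wlog hle : R₁ ≤ R₂ generalizing R₁ R₂ x y
  · obtain ⟨h1, h2⟩ := this hy hx hsy hsx hR₂ hR₁ (fun i => (h i).symm) (le_of_not_ge hle)
    exact ⟨h1.symm, h2.symm⟩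
  obtain rfl : x = y :=
    eq_of_sin_eq_mul_sin hcard ((one_le_div hR₁).2 hle) hx hy hsx hsy fun i => by
      rw [div_mul_eq_mul_div, eq_div_iff hR₁.ne', mul_comm, h i]
  obtain ⟨i⟩ : Nonempty ι := Fintype.card_pos_iff.1 (by omega)
  exact ⟨mul_right_cancel₀ (sin_pos_of_mem_Ioo (hx i)).ne' (h i), rfl⟩

theorem pos_and_lt_of_sin_mul_sin_mul_sin_pos {α β : ℝ} (hα : α ∈ Ico 0 (2 * π))
    (hβ : β ∈ Ico 0 (2 * π)) (h : 0 < sin (α / 2) * sin ((β - α) / 2) * sin (β / 2)) :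
    0 < α ∧ α < β := by
  have hsα : 0 ≤ sin (α / 2) :=
    sin_nonneg_of_nonneg_of_le_pi (by linarith [hα.1]) (by linarith [hα.2])
  have hsβ : 0 ≤ sin (β / 2) :=
    sin_nonneg_of_nonneg_of_le_pi (by linarith [hβ.1]) (by linarith [hβ.2])
  obtain rfl | hα0 := hα.1.eq_or_lt
  · simp at h
  refine ⟨hα0, lt_of_not_ge fun hle => h.not_ge ?_⟩
  exact mul_nonpos_of_nonpos_of_nonneg (mul_nonpos_of_nonneg_of_nonpos hsα
    (sin_nonpos_of_nonpos_of_neg_pi_le (by linarith) (by linarith [hα.2, hβ.1]))) hsβ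

theorem strictMono_of_sin_mul_sin_mul_sin_pos {n : ℕ} [NeZero n] (hn : 3 ≤ n) {φ : Fin n → ℝ}
    (h0 : φ 0 = 0) (hφ : ∀ i, φ i ∈ Ico 0 (2 * π))
    (h : ∀ j k : Fin n, 0 < j → j < k →
      0 < sin (φ j / 2) * sin ((φ k - φ j) / 2) * sin (φ k / 2)) :
    StrictMono φ := by
  have key : ∀ j k : Fin n, 0 < j → j < k → 0 < φ j ∧ φ j < φ k := fun j k hj hjk =>
    pos_and_lt_of_sin_mul_sin_mul_sin_pos (hφ j) (hφ k) (h j k hj hjk)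
  have h1 : (0 : Fin n) < ⟨1, by omega⟩ := by rw [Fin.lt_def]; simp
  have hpos : ∀ k : Fin n, 0 < k → 0 < φ k := by
    intro k hk
    rw [Fin.lt_def, Fin.val_zero] at hk
    obtain hk1 | hk1 := (show (⟨1, by omega⟩ : Fin n) ≤ k by rw [Fin.le_def]; exact hk).eq_or_lt
    · exact hk1 ▸ (key _ ⟨2, by omega⟩ h1 (by rw [Fin.lt_def]; simp)).1
    · exact (key _ k h1 hk1).1.trans (key _ k h1 hk1).2
  intro j k hjk
  obtain rfl | hj := eq_or_ne j 0
  · exact h0 ▸ hpos k hjk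
  · exact (key j k (Fin.pos_iff_ne_zero.2 hj) hjk).2

section Plane

open Complex ComplexConjugate

local notation "ℝ²" => EuclideanSpace ℝ (Fin 2)

theorem exp_toIcoMod_mul_I (θ : ℝ) : exp (toIcoMod two_pi_pos 0 θ * I) = exp (θ * I) := by
  rw [← self_sub_toIcoDiv_zsmul two_pi_pos 0 θ]
  push_cast
  exact exp_mul_I_periodic.sub_zsmul_eq _

theorem exists_angles_of_norm_eq {ι : Type*} {z : ι → ℂ} {r : ℝ} (h : ∀ i, ‖z i‖ = r) (i₀ : ι) :
    ∃ φ : ι → ℝ, φ i₀ = 0 ∧ (∀ i, φ i ∈ Ico 0 (2 * π)) ∧ ∀ i, z i = exp (φ i * I) * z i₀ := by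
  refine ⟨fun i => toIcoMod two_pi_pos 0 (arg (z i) - arg (z i₀)), ?_, fun i => ?_, fun i => ?_⟩
  · dsimp only
    rw [sub_self, toIcoMod_eq_self]
    exact ⟨le_rfl, by linarith [two_pi_pos]⟩
  · simpa using toIcoMod_mem_Ico two_pi_pos 0 (arg (z i) - arg (z i₀))
  · dsimp only
    have hi := norm_mul_exp_arg_mul_I (z i)
    have h0 := norm_mul_exp_arg_mul_I (z i₀)
    rw [h] at hi h0
    rw [exp_toIcoMod_mul_I, ofReal_sub, sub_mul, Complex.exp_sub, div_mul_eq_mul_div,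
      eq_div_iff (Complex.exp_ne_zero _)]
    linear_combination -exp (arg (z i₀) * I) * hi + exp (arg (z i) * I) * h0

theorem exists_half_gaps {n : ℕ} [NeZero n] (hn : 2 ≤ n) {φ : Fin n → ℝ} (hmono : StrictMono φ)
    (h0 : φ 0 = 0) (hlt : ∀ i, φ i < 2 * π) :
    ∃ x : Fin n → ℝ, (∀ i, x i ∈ Ioo 0 π) ∧ ∑ i, x i = π ∧
      ∀ i, exp (φ (i + 1) * I) = exp (↑(2 * x i) * I) * exp (φ i * I) := by
  obtain ⟨m, rfl⟩ : ∃ m, n = m + 1 := ⟨n - 1, by omega⟩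
  have hlast : 0 < φ (Fin.last m) :=
    h0 ▸ hmono (by rw [Fin.lt_def, Fin.val_zero, Fin.val_last]; omega)
  -- The last gap closes the polygon, running from `φ (Fin.last m)` to `φ 0 + 2 * π`.
  refine ⟨fun i => (φ (i + 1) - φ i) / 2 + if i = Fin.last m then π else 0, fun i => ?_, ?_,
    fun i => ?_⟩
  · by_cases hi : i = Fin.last m
    · simp only [hi, Fin.last_add_one, h0, if_true]
      constructor <;> linarith [hlt (Fin.last m)]
    · have hφi : 0 ≤ φ i := h0 ▸ hmono.monotone (Fin.zero_le i)
      have := hmono (Fin.lt_add_one_iff.2 (Fin.lt_last_iff_ne_last.2 hi))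
      simp only [hi, if_false, add_zero]
      constructor <;> linarith [hlt (i + 1)]
  · rw [sum_add_distrib, ← sum_div, sum_sub_distrib,
      Fintype.sum_equiv (Equiv.addRight 1) (fun i => φ (i + 1)) φ fun _ => rfl, sum_ite_eq']
    simp
  · rw [← Complex.exp_add]
    by_cases hi : i = Fin.last m
    · simp only [hi, Fin.last_add_one, h0, if_true]
      rw [show (↑(2 * ((0 - φ (Fin.last m)) / 2 + π)) * I + ↑(φ (Fin.last m)) * I : ℂ) =
          2 * π * I by push_cast; ring,
        Complex.exp_two_pi_mul_I, ofReal_zero, zero_mul, Complex.exp_zero]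
    · simp only [hi, if_false, add_zero]
      congr 1
      push_cast
      ring

noncomputable def toComplex : ℝ² ≃ₗᵢ[ℝ] ℂ := orthonormalBasisOneI.repr.symm

@[simp] theorem toComplex_re (P : ℝ²) : (toComplex P).re = P 0 := by simp [toComplex]

@[simp] theorem toComplex_im (P : ℝ²) : (toComplex P).im = P 1 := by simp [toComplex]

theorem cross2_eq_im (P Q R : ℝ²) :
    cross2 P Q R = (conj (toComplex Q - toComplex P) * (toComplex R - toComplex P)).im := by
  simp only [cross2, map_sub, mul_im, sub_re, sub_im, conj_re, conj_im, toComplex_re,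
    toComplex_im]
  ring

theorem im_conj_mul_mul_mul (c u v : ℂ) :
    (conj (c * u) * (c * v)).im = ‖c‖ ^ 2 * (conj u * v).im := by
  simp only [map_mul, mul_im, mul_re, conj_re, conj_im, Complex.sq_norm, normSq_apply]
  ring

theorem im_conj_exp_sub_mul_exp_sub (α β γ : ℝ) :
    (conj (exp (β * I) - exp (α * I)) * (exp (γ * I) - exp (α * I))).im =
      4 * (Real.sin ((β - α) / 2) * Real.sin ((γ - β) / 2) * Real.sin ((γ - α) / 2)) := by
  calc _ = (Real.cos β - Real.cos α) * (Real.sin γ - Real.sin α) -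
        (Real.sin β - Real.sin α) * (Real.cos γ - Real.cos α) := by
        simp only [mul_im, conj_re, conj_im, sub_re, sub_im, exp_ofReal_mul_I_re,
          exp_ofReal_mul_I_im]
        ring
    _ = _ := by
        rw [Real.cos_sub_cos, Real.cos_sub_cos, Real.sin_sub_sin, Real.sin_sub_sin,
          show (γ - β) / 2 = (γ + α) / 2 - (β + α) / 2 by ring, Real.sin_sub]
        ring

theorem cross2_eq_of_sub_eq_exp_mul {P Q S O : ℝ²} {c : ℂ} {α β γ : ℝ}
    (hP : toComplex P - toComplex O = exp (α * I) * c)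
    (hQ : toComplex Q - toComplex O = exp (β * I) * c)
    (hS : toComplex S - toComplex O = exp (γ * I) * c) :
    cross2 P Q S = 4 * ‖c‖ ^ 2 *
      (Real.sin ((β - α) / 2) * Real.sin ((γ - β) / 2) * Real.sin ((γ - α) / 2)) := by
  rw [cross2_eq_im, ← sub_sub_sub_cancel_right _ _ (toComplex O), hP, hQ,
    ← sub_sub_sub_cancel_right (toComplex S) _ (toComplex O), hS, hP, ← sub_mul, ← sub_mul,
    mul_comm _ c, mul_comm _ c, im_conj_mul_mul_mul, im_conj_exp_sub_mul_exp_sub]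
  ring

theorem dist_eq_of_sub_eq_exp_mul {P Q O : ℝ²} {θ : ℝ}
    (h : toComplex Q - toComplex O = exp (θ * I) * (toComplex P - toComplex O)) :
    dist P Q = 2 * |Real.sin (θ / 2)| * dist P O := by
  rw [← toComplex.dist_map, ← toComplex.dist_map, dist_eq_norm, dist_eq_norm,
    ← sub_sub_sub_cancel_right _ _ (toComplex O), h, ← neg_sub, norm_neg, ← sub_one_mul,
    norm_mul, mul_comm (θ : ℂ), norm_exp_I_mul_ofReal_sub_one, norm_mul, Real.norm_eq_abs,
    Real.norm_eq_abs, abs_two]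

noncomputable def rigidMotion (c : Circle) (t : ℂ) : ℝ² ≃ᵢ ℝ² :=
  toComplex.toIsometryEquiv.trans <| (rotation c).toIsometryEquiv.trans <|
    (IsometryEquiv.addLeft t).trans toComplex.symm.toIsometryEquiv

@[simp] theorem toComplex_rigidMotion (c : Circle) (t : ℂ) (P : ℝ²) :
    toComplex (rigidMotion c t P) = t + c * toComplex P := by
  simp [rigidMotion]

theorem cross2_rigidMotion (c : Circle) (t : ℂ) (P Q R : ℝ²) :
    cross2 (rigidMotion c t P) (rigidMotion c t Q) (rigidMotion c t R) = cross2 P Q R := by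
  simp only [cross2_eq_im, toComplex_rigidMotion, add_sub_add_left_eq_sub, ← mul_sub,
    im_conj_mul_mul_mul, Circle.norm_coe, one_pow, one_mul]

theorem exists_half_angles_of_convex_of_dist_eq {n : ℕ} [NeZero n] (hn : 3 ≤ n) {A : Fin n → ℝ²}
    {O : ℝ²} {R : ℝ} (hconv : ∀ i j k : Fin n, i < j → j < k → 0 < cross2 (A i) (A j) (A k))
    (hcirc : ∀ i, dist (A i) O = R) :
    0 < R ∧ ∃ x : Fin n → ℝ, (∀ i, x i ∈ Ioo 0 π) ∧ ∑ i, x i = π ∧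
      (∀ i, dist (A i) (A (i + 1)) = 2 * R * Real.sin (x i)) ∧
      ∀ i, toComplex (A (i + 1)) - toComplex O =
        exp (↑(2 * x i) * I) * (toComplex (A i) - toComplex O) := by
  have hnorm : ∀ i, ‖toComplex (A i) - toComplex O‖ = R := fun i => by
    rw [← dist_eq_norm, toComplex.dist_map, hcirc]
  obtain ⟨φ, hφ0, hφ, hrep⟩ := exists_angles_of_norm_eq hnorm 0
  have hcross : ∀ j k, cross2 (A 0) (A j) (A k) =
      4 * R ^ 2 * (Real.sin (φ j / 2) * Real.sin ((φ k - φ j) / 2) * Real.sin (φ k / 2)) :=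
    fun j k => by
      rw [cross2_eq_of_sub_eq_exp_mul (hrep 0) (hrep j) (hrep k), hnorm, hφ0, sub_zero, sub_zero]
  have hR : 0 < R := by
    have h := hconv 0 ⟨1, by omega⟩ ⟨2, by omega⟩ (by rw [Fin.lt_def]; simp)
      (by rw [Fin.lt_def]; simp)
    rw [hcross] at h
    exact (hcirc 0 ▸ dist_nonneg).lt_of_ne (by rintro rfl; simp at h)
  -- Convexity at the triangles `A 0, A j, A k` makes the angles increase: the polygon winds once.
  have hmono := strictMono_of_sin_mul_sin_mul_sin_pos hn hφ0 hφ fun j k hj hjk =>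
    pos_of_mul_pos_right (hcross j k ▸ hconv 0 j k hj hjk) (by positivity)
  obtain ⟨x, hx, hsum, hstep⟩ := exists_half_gaps (by omega) hmono hφ0 fun i => (hφ i).2
  have hrot : ∀ i, toComplex (A (i + 1)) - toComplex O =
      exp (↑(2 * x i) * I) * (toComplex (A i) - toComplex O) := fun i => by
    rw [hrep (i + 1), hstep, hrep i, mul_assoc]
  refine ⟨hR, x, hx, hsum, fun i => ?_, hrot⟩
  rw [dist_eq_of_sub_eq_exp_mul (hrot i), hcirc, mul_div_cancel_left₀ _ two_ne_zero,
    abs_of_pos (Real.sin_pos_of_mem_Ioo (hx i))]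
  ring

open Fin.NatCast in
theorem exists_rigidMotion_of_rotation_steps {n : ℕ} [NeZero n] {A B : Fin n → ℝ²} {O₁ O₂ : ℝ²}
    (u : Fin n → ℂ)
    (hA : ∀ i, toComplex (A (i + 1)) - toComplex O₁ = u i * (toComplex (A i) - toComplex O₁))
    (hB : ∀ i, toComplex (B (i + 1)) - toComplex O₂ = u i * (toComplex (B i) - toComplex O₂))
    (h0 : dist (A 0) O₁ = dist (B 0) O₂) (hA0 : A 0 ≠ O₁) :
    ∃ c t, ∀ i, rigidMotion c t (A i) = B i := by
  have hzA : toComplex (A 0) - toComplex O₁ ≠ 0 := sub_ne_zero.2 (toComplex.injective.ne hA0)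
  have hnorm : ‖(toComplex (B 0) - toComplex O₂) / (toComplex (A 0) - toComplex O₁)‖ = 1 := by
    rw [norm_div, ← dist_eq_norm, ← dist_eq_norm, toComplex.dist_map, toComplex.dist_map, h0,
      div_self (h0 ▸ dist_pos.2 hA0).ne']
  obtain ⟨c, hc⟩ : ∃ c : Circle,
      (c : ℂ) = (toComplex (B 0) - toComplex O₂) / (toComplex (A 0) - toComplex O₁) :=
    ⟨⟨_, mem_sphere_zero_iff_norm.2 hnorm⟩, rfl⟩
  have hk : ∀ k : ℕ, c * (toComplex (A k) - toComplex O₁) = toComplex (B k) - toComplex O₂ := by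
    intro k
    induction k with
    | zero => exact hc ▸ div_mul_cancel₀ _ hzA
    | succ k ih => rw [Nat.cast_succ, hA, hB, ← ih]; ring
  refine ⟨c, toComplex O₂ - c * toComplex O₁, fun i => toComplex.injective ?_⟩
  have hi := hk i
  rw [Fin.cast_val_eq_self] at hi
  rw [toComplex_rigidMotion]
  linear_combination hi

end Plane

theorem cyclic_polygon_unique_general (n : ℕ) [NeZero n] (hn : 3 ≤ n) (a : Fin n → ℝ)
    (A B : Fin n → EuclideanSpace ℝ (Fin 2)) (O₁ O₂ : EuclideanSpace ℝ (Fin 2))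
    (R₁ R₂ : ℝ)
    (hAconv : ∀ i j k : Fin n, i < j → j < k → 0 < cross2 (A i) (A j) (A k))
    (hBconv : ∀ i j k : Fin n, i < j → j < k → 0 < cross2 (B i) (B j) (B k))
    (hAcirc : ∀ i, dist (A i) O₁ = R₁) (hBcirc : ∀ i, dist (B i) O₂ = R₂)
    (hAlen : ∀ i, dist (A i) (A (i + 1)) = a i)
    (hBlen : ∀ i, dist (B i) (B (i + 1)) = a i) :
    R₁ = R₂ ∧
      ∃ f : EuclideanSpace ℝ (Fin 2) ≃ᵢ EuclideanSpace ℝ (Fin 2),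
        (∀ P Q R, cross2 (f P) (f Q) (f R) = cross2 P Q R) ∧ ∀ i, f (A i) = B i := by
  obtain ⟨hR₁, x, hx, hsx, hAside, hArot⟩ :=
    exists_half_angles_of_convex_of_dist_eq hn hAconv hAcirc
  obtain ⟨hR₂, y, hy, hsy, hBside, hBrot⟩ :=
    exists_half_angles_of_convex_of_dist_eq hn hBconv hBcirc
  obtain ⟨rfl, rfl⟩ := eq_and_eq_of_mul_sin_eq (by simpa using hn) hx hy hsx hsy hR₁ hR₂ fun i => by
    linarith [hAside i, hBside i, hAlen i, hBlen i]
  obtain ⟨c, t, hct⟩ := exists_rigidMotion_of_rotation_steps _ hArot hBrot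
    (by rw [hAcirc, hBcirc]) (dist_pos.1 (hAcirc 0 ▸ hR₁))
  exact ⟨rfl, rigidMotion c t, cross2_rigidMotion c t, hct⟩

/-- Uniqueness of cyclic polygons: two convex polygons inscribed in circles (vertices
listed counterclockwise) with the same consecutive side lengths `a₁, …, aₙ` (positive,
each less than the sum of the others) have the same circumradius and are congruent by
an orientation-preserving isometry. -/
theorem cyclic_polygon_unique (n : ℕ) [NeZero n] (hn : 3 ≤ n) (a : Fin n → ℝ)
    (hapos : ∀ i, 0 < a i) (hpoly : ∀ j, a j < ∑ i ∈ Finset.univ.erase j, a i)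
    (A B : Fin n → EuclideanSpace ℝ (Fin 2)) (O₁ O₂ : EuclideanSpace ℝ (Fin 2))
    (R₁ R₂ : ℝ)
    (hAconv : ∀ i j k : Fin n, i < j → j < k → 0 < cross2 (A i) (A j) (A k))
    (hBconv : ∀ i j k : Fin n, i < j → j < k → 0 < cross2 (B i) (B j) (B k))
    (hAcirc : ∀ i, dist (A i) O₁ = R₁) (hBcirc : ∀ i, dist (B i) O₂ = R₂)
    (hAlen : ∀ i, dist (A i) (A (i + 1)) = a i)
    (hBlen : ∀ i, dist (B i) (B (i + 1)) = a i) :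
    R₁ = R₂ ∧
      ∃ f : EuclideanSpace ℝ (Fin 2) ≃ᵢ EuclideanSpace ℝ (Fin 2),
        (∀ P Q R, cross2 (f P) (f Q) (f R) = cross2 P Q R) ∧ ∀ i, f (A i) = B i :=
  cyclic_polygon_unique_general n hn a A B O₁ O₂ R₁ R₂ hAconv hBconv hAcirc hBcirc hAlen hBlen
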